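/- Let n ≥ 1, t > 0, let A ⊆ ℝⁿ be a Borel set, and let x, y ∈ ℝⁿ with x ≠ y. Then P_t(1_A)(x) ≤ P_t(1_{A_{d_t}})(y), where d_t = e^{−t}‖x−y‖ (isoperimetric-type Harnack inequality for the Ornstein–Uhlenbeck semigroup, which satisfies the curvature condition CD(1,∞)). -/

import Mathlib

open MeasureTheory Real

/-- The standard Gaussian probability measure on ℝⁿ. -/
noncomputable def gaussMeasure (n : ℕ) : Measure (EuclideanSpace ℝ (Fin n)) :=
  volume.withDensity
    (fun z => ENNReal.ofReal ((2 * π) ^ (-(n : ℝ) / 2) * Real.exp (-‖z‖ ^ 2 / 2)))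

/-- The Ornstein–Uhlenbeck semigroup via the Mehler formula:
`P_t f(x) = ∫ f(e^{-t} x + √(1-e^{-2t}) z) dγ(z)`. -/
noncomputable def ouSG (n : ℕ) (t : ℝ) (f : EuclideanSpace ℝ (Fin n) → ℝ)
    (x : EuclideanSpace ℝ (Fin n)) : ℝ :=
  ∫ z, f (Real.exp (-t) • x + Real.sqrt (1 - Real.exp (-2 * t)) • z) ∂(gaussMeasure n)

lemma gauss_integrable_aux (n : ℕ) :
    Integrable (fun v : EuclideanSpace ℝ (Fin n) =>
      (2 * π) ^ (-(n : ℝ) / 2) * Real.exp (-‖v‖ ^ 2 / 2)) := by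
  have h := (GaussianFourier.integrable_cexp_neg_mul_sq_norm_add
    (b := ((2:ℝ)⁻¹ : ℂ)) (by norm_num) 0 (0 : EuclideanSpace ℝ (Fin n))).norm
  have h2 : Integrable (fun v : EuclideanSpace ℝ (Fin n) => Real.exp (-‖v‖ ^ 2 / 2)) := by
    apply h.congr
    filter_upwards with v
    rw [Complex.norm_exp]
    norm_num
    rw [← Complex.ofReal_pow, Complex.ofReal_re]
    ring
  exact h2.const_mul _

lemma gaussMeasure_ne_top (n : ℕ) (S : Set (EuclideanSpace ℝ (Fin n))) :
    gaussMeasure n S ≠ ⊤ := by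
  refine ne_top_of_le_ne_top ?_ (measure_mono (Set.subset_univ S))
  rw [gaussMeasure, withDensity_apply _ MeasurableSet.univ, Measure.restrict_univ]
  exact (gauss_integrable_aux n).lintegral_lt_top.ne

/-- Isoperimetric-type Harnack inequality for the Ornstein–Uhlenbeck semigroup
(curvature `CD(1,∞)`): `P_t(1_A)(x) ≤ P_t(1_{A_{d_t}})(y)` with `d_t = e^{-t} ‖x-y‖`,
where `A_ε` is the open `ε`-neighborhood of `A`. -/
theorem isoperimetric_harnack_ou (n : ℕ) (hn : 1 ≤ n) (t : ℝ) (ht : 0 < t)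
    (A : Set (EuclideanSpace ℝ (Fin n))) (hA : MeasurableSet A)
    (x y : EuclideanSpace ℝ (Fin n)) (hxy : x ≠ y) :
    ouSG n t (Set.indicator A (fun _ => 1)) x ≤
      ouSG n t (Set.indicator (Metric.thickening (Real.exp (-t) * ‖x - y‖) A) (fun _ => 1))
        y := by
  classical
  set e : ℝ := Real.exp (-t) with he
  have he0 : 0 < e := Real.exp_pos _
  set s : ℝ := Real.sqrt (1 - Real.exp (-2 * t)) with hsdef
  have hs : 0 < s := by
    apply Real.sqrt_pos.mpr
    have : Real.exp (-2 * t) < 1 := Real.exp_lt_one_iff.mpr (by linarith)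
    linarith
  set d : ℝ := e * ‖x - y‖ with hd
  have hxy' : x - y ≠ 0 := sub_ne_zero.mpr hxy
  have hd0 : 0 < d := mul_pos he0 (norm_pos_iff.mpr hxy')
  set c : EuclideanSpace ℝ (Fin n) := (e / s) • (x - y) with hc
  set B : Set (EuclideanSpace ℝ (Fin n)) := (fun z : EuclideanSpace ℝ (Fin n) => e • x + s • z) ⁻¹' A with hBdef
  set C : Set (EuclideanSpace ℝ (Fin n)) := (fun z : EuclideanSpace ℝ (Fin n) => e • y + s • z) ⁻¹' (Metric.thickening d A) with hCdef
  have hmapx : Measurable (fun z : EuclideanSpace ℝ (Fin n) => e • x + s • z) :=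
    (measurable_id.const_smul s).const_add _
  have hmapy : Measurable (fun z : EuclideanSpace ℝ (Fin n) => e • y + s • z) :=
    (measurable_id.const_smul s).const_add _
  have hB : MeasurableSet B := hmapx hA
  have hC : MeasurableSet C := hmapy Metric.isOpen_thickening.measurableSet
  -- rewrite both sides as measures
  have hLHS : ouSG n t (Set.indicator A (fun _ => 1)) x = (gaussMeasure n B).toReal := by
    rw [ouSG, ← measureReal_def, ← integral_indicator_one hB]
    congr 1
  have hRHS : ouSG n t
      (Set.indicator (Metric.thickening (Real.exp (-t) * ‖x - y‖) A) (fun _ => 1)) y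
      = (gaussMeasure n C).toReal := by
    rw [ouSG, ← measureReal_def, ← integral_indicator_one hC]
    congr 1
  rw [hLHS, hRHS]
  refine ENNReal.toReal_mono (gaussMeasure_ne_top n C) ?_
  -- the density
  set ρ : EuclideanSpace ℝ (Fin n) → ENNReal := fun z => ENNReal.ofReal ((2 * π) ^ (-(n : ℝ) / 2)
    * Real.exp (-‖z‖ ^ 2 / 2)) with hρdef
  have hρcont : Continuous ρ := by
    apply ENNReal.continuous_ofReal.comp
    fun_prop
  have hρ : Measurable ρ := hρcont.measurable
  -- the translation vectors
  set v : ℕ → EuclideanSpace ℝ (Fin n) := fun k => (((k : ℝ) + 1)⁻¹ * (e / s)) • (x - y) with hv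
  -- geometric inclusion
  have hincl : ∀ k : ℕ, ∀ z ∈ B, z + v k ∈ C := by
    intro k z hz
    have hk0 : 0 < ((k : ℝ) + 1)⁻¹ := by positivity
    have hk1 : ((k : ℝ) + 1)⁻¹ ≤ 1 := by
      rw [inv_le_one_iff₀]; right; simp
    refine Set.mem_preimage.mpr (Metric.mem_thickening_iff.mpr ⟨e • x + s • z, hz, ?_⟩)
    have key : e • y + s • (z + v k) - (e • x + s • z)
        = (((k : ℝ) + 1)⁻¹ * e - e) • (x - y) := by
      simp only [hv, smul_add, smul_smul]
      rw [show s * (((k : ℝ) + 1)⁻¹ * (e / s)) = ((k : ℝ) + 1)⁻¹ * e by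
        field_simp]
      module
    rw [dist_eq_norm, key, norm_smul, Real.norm_eq_abs]
    have habs : |((k : ℝ) + 1)⁻¹ * e - e| < e := by
      rw [abs_lt]
      constructor <;> nlinarith
    calc |((k : ℝ) + 1)⁻¹ * e - e| * ‖x - y‖ < e * ‖x - y‖ :=
          mul_lt_mul_of_pos_right habs (norm_pos_iff.mpr hxy')
      _ = d := rfl
  -- key measure estimate via translation
  have hstep : ∀ k : ℕ, ∫⁻ w in B, ρ (w + v k) ∂volume ≤ gaussMeasure n C := by
    intro k
    have htrans : gaussMeasure n C = ∫⁻ w, C.indicator ρ (w + v k) ∂volume := by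
      rw [gaussMeasure, withDensity_apply _ hC, ← lintegral_indicator hC ρ,
        lintegral_add_right_eq_self (fun z => C.indicator ρ z) (v k)]
    rw [htrans, ← lintegral_indicator hB (fun w => ρ (w + v k))]
    refine lintegral_mono fun w => ?_
    by_cases hw : w ∈ B
    · rw [Set.indicator_of_mem hw, Set.indicator_of_mem (hincl k w hw)]
    · rw [Set.indicator_of_notMem hw]
      exact zero_le
  -- Fatou
  have hγB : gaussMeasure n B = ∫⁻ w in B, ρ w ∂volume := by
    rw [gaussMeasure, withDensity_apply _ hB]
  rw [hγB]
  have hlim : ∀ w : EuclideanSpace ℝ (Fin n), Filter.Tendsto (fun k : ℕ => ρ (w + v k)) Filter.atTop (nhds (ρ w)) := by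
    intro w
    have h1 : Filter.Tendsto (fun k : ℕ => ((k : ℝ) + 1)⁻¹) Filter.atTop (nhds 0) :=
      tendsto_one_div_add_atTop_nhds_zero_nat.congr (by intro k; rw [one_div])
    have h2 : Filter.Tendsto (fun k : ℕ => w + v k) Filter.atTop (nhds w) := by
      have : Filter.Tendsto (fun k : ℕ => v k) Filter.atTop (nhds 0) := by
        rw [hv]
        have := ((h1.mul_const (e / s)).smul_const (x - y))
        simpa using this
      simpa using (tendsto_const_nhds.add this)
    exact (hρcont.tendsto w).comp h2
  calc ∫⁻ w in B, ρ w ∂volume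
      = ∫⁻ w in B, Filter.liminf (fun k : ℕ => ρ (w + v k)) Filter.atTop ∂volume := by
        congr 1
        funext w
        exact ((hlim w).liminf_eq).symm
    _ ≤ Filter.liminf (fun k : ℕ => ∫⁻ w in B, ρ (w + v k) ∂volume) Filter.atTop :=
        lintegral_liminf_le fun k => hρ.comp (measurable_id.add_const (v k))
    _ ≤ gaussMeasure n C := by
        refine Filter.liminf_le_of_le ?_ ?_
        · isBoundedDefault
        · intro b hb
          obtain ⟨k, hk⟩ := hb.exists
          exact hk.trans (hstep k)
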